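/- For every integer n ≥ 1, every natural number m, and every real x ∈ [2m, 2m+2], f_n(x) has the same sign as u_m, i.e., u_m · f_n(x) ≥ 0. -/

import Mathlib

/-- The ±1 Thue–Morse sequence: `u n = (-1)^(s₂(n)+1)` where `s₂` is the binary digit sum. -/
def u (n : ℕ) : ℤ := (-1) ^ ((Nat.digits 2 n).sum + 1)

/-- The "Pascal triangle" associated to the Thue–Morse sequence:
`Sig k n` is `Σ^k_n` (k the superscript, n the subscript). -/
def Sig : ℕ → ℕ → ℤ
  | k, 0 => u k
  | 0, _ + 1 => 0
  | k + 1, n + 1 => Sig k n + Sig k (n + 1)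

/-- The renormalized points `x^k_n = 2^{-(n-1)(n-2)/2} Σ^k_n`. -/
noncomputable def xkn (n k : ℕ) : ℝ := (Sig k n : ℝ) / 2 ^ ((n - 1) * (n - 2) / 2)

/-- The piecewise linear interpolation `f n` of the points `x^k_n` at `k/2^{n-1}`,
vanishing on the nonpositive reals. -/
noncomputable def f (n : ℕ) (x : ℝ) : ℝ :=
  if x ≤ 0 then 0
  else
    xkn n ⌊(2 : ℝ) ^ (n - 1) * x⌋₊ +
      (2 : ℝ) ^ (n - 1) * (x - (⌊(2 : ℝ) ^ (n - 1) * x⌋₊ : ℝ) / 2 ^ (n - 1)) *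
        (xkn n (⌊(2 : ℝ) ^ (n - 1) * x⌋₊ + 1) - xkn n ⌊(2 : ℝ) ^ (n - 1) * x⌋₊)

/-!
On the `m`-th block `[m 2ⁿ, (m+1) 2ⁿ]` the row `k ↦ Σ^k_n` is `-u_m` times its first block,
and the first block is `≤ 0`, so `u_m Σ^k_n ≥ 0` there; `f_n` interpolates these values
linearly on `[2m, 2m+2]`. Both facts are proved by induction on `n`, since row `n+1` is the
sequence of partial sums of row `n`: blocks of length `2ⁿ` in row `n` come in pairs `B, -B` (because
`u_{2m+1} = -u_{2m}`), so the partial sums over whole blocks of length `2ⁿ⁺¹` vanish, and the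
partial sums over `B, -B` with `B ≤ 0` stay `≤ 0`.
-/

open Finset

lemma u_zero : u 0 = -1 := by simp [u]

lemma u_two_mul (m : ℕ) : u (2 * m) = u m := by
  rcases Nat.eq_zero_or_pos m with rfl | hm
  · rfl
  · rw [u, u, Nat.digits_def' (by norm_num) (by omega)]
    simp

lemma u_two_mul_add_one (m : ℕ) : u (2 * m + 1) = -u m := by
  rw [u, u, Nat.digits_def' (by norm_num) (by omega),
    show (2 * m + 1) % 2 = 1 by omega, show (2 * m + 1) / 2 = m by omega]
  simp only [List.sum_cons]
  ring

lemma u_one : u 1 = 1 := by simpa [u_zero] using u_two_mul_add_one 0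

lemma u_mul_self (m : ℕ) : u m * u m = 1 := by
  rw [u, ← pow_add]
  exact Even.neg_one_pow ⟨_, rfl⟩

-- The sign is `-u m` so that block `0` is consistent, as `u 0 = -1`.
def ThueMorseBlocks (a : ℕ → ℤ) (p : ℕ) : Prop :=
  ∀ m j, j < p → a (m * p + j) = -u m * a j

namespace ThueMorseBlocks

variable {a : ℕ → ℤ} {p : ℕ}

lemma add_period (h : ThueMorseBlocks a p) {i : ℕ} (hi : i < p) : a (p + i) = -a i := by
  simpa [u_one] using h 1 i hi

lemma two_mul (h : ThueMorseBlocks a p) : ThueMorseBlocks a (2 * p) := by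
  intro m j hj
  rcases lt_or_ge j p with hjp | hjp
  · rw [show m * (2 * p) + j = 2 * m * p + j by ring, h _ _ hjp, u_two_mul]
  · obtain ⟨i, rfl⟩ := Nat.exists_eq_add_of_le hjp
    have hi : i < p := by omega
    rw [show m * (2 * p) + (p + i) = (2 * m + 1) * p + i by ring, h _ _ hi, h.add_period hi,
      u_two_mul_add_one]
    ring

lemma sum_range_two_mul (h : ThueMorseBlocks a p) : ∑ i ∈ range (2 * p), a i = 0 := by
  rw [_root_.two_mul, sum_range_add]
  simp [sum_congr rfl fun i hi => h.add_period (mem_range.mp hi)]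

lemma sum_range_mul (h : ThueMorseBlocks a p) (hp : ∑ i ∈ range p, a i = 0) (m : ℕ) :
    ∑ i ∈ range (m * p), a i = 0 := by
  induction m with
  | zero => simp
  | succ m ih =>
    rw [add_mul, one_mul, sum_range_add, ih,
      sum_congr rfl fun i hi => h m i (mem_range.mp hi), ← mul_sum, hp]
    simp

lemma partialSums (h : ThueMorseBlocks a p) (hp : ∑ i ∈ range p, a i = 0) :
    ThueMorseBlocks (fun k => ∑ i ∈ range k, a i) p := by
  intro m j hj
  dsimp only
  rw [sum_range_add, h.sum_range_mul hp, zero_add, mul_sum]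
  exact sum_congr rfl fun i hi => h m i ((mem_range.mp hi).trans hj)

lemma sum_range_nonpos (h : ThueMorseBlocks a p) (ha : ∀ i < p, a i ≤ 0) {j : ℕ}
    (hj : j ≤ 2 * p) : ∑ i ∈ range j, a i ≤ 0 := by
  rcases le_total j p with hjp | hjp
  · exact sum_nonpos fun i hi => ha i ((mem_range.mp hi).trans_le hjp)
  · obtain ⟨j', rfl⟩ := Nat.exists_eq_add_of_le hjp
    have hj' : j' ≤ p := by omega
    -- the partial sum over `B, -B` is the tail of `B` starting at `j'`
    rw [sum_range_add, ← sum_range_add_sum_Ico a hj',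
      sum_congr rfl fun i hi => h.add_period ((mem_range.mp hi).trans_le hj'), sum_neg_distrib]
    simpa using sum_nonpos fun i hi => ha i (mem_Ico.mp hi).2

end ThueMorseBlocks

@[simp]
lemma Sig_zero_right (k : ℕ) : Sig k 0 = u k := by cases k <;> rfl

lemma Sig_succ_eq_sum (k n : ℕ) : Sig k (n + 1) = ∑ i ∈ range k, Sig i n := by
  induction k with
  | zero => rfl
  | succ k ih => rw [sum_range_succ, ← ih, Sig, add_comm]

lemma Sig_thueMorseBlocks : ∀ n, ThueMorseBlocks (Sig · n) (2 ^ n)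
  | 0 => fun m j hj => by
    obtain rfl : j = 0 := by omega
    simp [u_zero]
  | n + 1 => by
    have h := Sig_thueMorseBlocks n
    simpa only [pow_succ', Sig_succ_eq_sum] using h.two_mul.partialSums h.sum_range_two_mul

lemma Sig_succ_nonpos_of_row_nonpos {n : ℕ} (hrow : ∀ i < 2 ^ n, Sig i n ≤ 0) {j : ℕ}
    (hj : j ≤ 2 ^ (n + 1)) : Sig j (n + 1) ≤ 0 := by
  rw [Sig_succ_eq_sum]
  exact (Sig_thueMorseBlocks n).sum_range_nonpos hrow (by rwa [← pow_succ'])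

lemma Sig_nonpos_of_lt : ∀ n, ∀ i < 2 ^ n, Sig i n ≤ 0
  | 0, i, hi => by
    obtain rfl : i = 0 := by omega
    simp [u_zero]
  | n + 1, _, hi => Sig_succ_nonpos_of_row_nonpos (Sig_nonpos_of_lt n) hi.le

lemma u_mul_Sig_nonneg (n m k : ℕ) (hk₁ : m * 2 ^ (n + 1) ≤ k)
    (hk₂ : k ≤ (m + 1) * 2 ^ (n + 1)) : 0 ≤ u m * Sig k (n + 1) := by
  obtain ⟨j, rfl⟩ := Nat.exists_eq_add_of_le hk₁
  rcases (show j ≤ 2 ^ (n + 1) by linarith).lt_or_eq with hj | rfl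
  · have hneg := Sig_succ_nonpos_of_row_nonpos (Sig_nonpos_of_lt n) hj.le
    have h : Sig (m * 2 ^ (n + 1) + j) (n + 1) = -u m * Sig j (n + 1) :=
      Sig_thueMorseBlocks (n + 1) m j hj
    rw [h]
    linear_combination hneg + Sig j (n + 1) * u_mul_self m
  · have h := Sig_thueMorseBlocks (n + 1) (m + 1) 0 (by positivity)
    rw [add_mul, one_mul, add_zero] at h
    simp [h, Sig_succ_eq_sum]

noncomputable def linInterp (y : ℕ → ℝ) (s : ℝ) : ℝ :=
  y ⌊s⌋₊ + (s - ⌊s⌋₊) * (y (⌊s⌋₊ + 1) - y ⌊s⌋₊)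

lemma mul_linInterp (c : ℝ) (y : ℕ → ℝ) (s : ℝ) :
    c * linInterp y s = linInterp (fun k => c * y k) s := by
  simp only [linInterp]
  ring

lemma linInterp_nonneg {y : ℕ → ℝ} {a b : ℕ} (hy : ∀ k, a ≤ k → k ≤ b → 0 ≤ y k) {s : ℝ}
    (ha : a ≤ s) (hb : s ≤ b) : 0 ≤ linInterp y s := by
  set k := ⌊s⌋₊
  have hks : k ≤ s := Nat.floor_le ((Nat.cast_nonneg a).trans ha)
  have hsk : s < k + 1 := Nat.lt_floor_add_one s
  have hak : a ≤ k := Nat.le_floor ha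
  have hkb : k ≤ b := by exact_mod_cast hks.trans hb
  rcases hkb.lt_or_eq with hlt | rfl
  · rw [linInterp, show y k + (s - k) * (y (k + 1) - y k)
      = (1 - (s - k)) * y k + (s - k) * y (k + 1) by ring]
    exact add_nonneg (mul_nonneg (by linarith) (hy k hak hkb))
      (mul_nonneg (by linarith) (hy (k + 1) (by omega) hlt))
  · rw [linInterp, show s - k = 0 by linarith, zero_mul, add_zero]
    exact hy k hak hkb

lemma f_eq_linInterp (n : ℕ) {x : ℝ} (hx : 0 < x) :
    f n x = linInterp (xkn n) (2 ^ (n - 1) * x) := by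
  rw [f, if_neg hx.not_ge, linInterp, mul_sub ((2 : ℝ) ^ (n - 1)) x,
    mul_div_cancel₀ _ (by positivity : (2 : ℝ) ^ (n - 1) ≠ 0)]

theorem f_sign (n : ℕ) (hn : 1 ≤ n) (m : ℕ) (x : ℝ)
    (hx : x ∈ Set.Icc (2 * (m : ℝ)) (2 * (m : ℝ) + 2)) :
    0 ≤ (u m : ℝ) * f n x := by
  obtain ⟨N, rfl⟩ := Nat.exists_eq_add_of_le' hn
  rcases le_or_gt x 0 with hx0 | hx0
  · simp [f, hx0]
  rw [f_eq_linInterp _ hx0, mul_linInterp, Nat.add_sub_cancel]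
  refine linInterp_nonneg (a := m * 2 ^ (N + 1)) (b := (m + 1) * 2 ^ (N + 1))
    (fun k hk₁ hk₂ => ?_) ?_ ?_
  · rw [xkn, mul_div_assoc']
    exact div_nonneg (by exact_mod_cast u_mul_Sig_nonneg N m k hk₁ hk₂) (by positivity)
  · push_cast
    nlinarith [hx.1, pow_succ (2 : ℝ) N, pow_pos (two_pos : (0 : ℝ) < 2) N]
  · push_cast
    nlinarith [hx.2, pow_succ (2 : ℝ) N, pow_pos (two_pos : (0 : ℝ) < 2) N]
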